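/- arXiv:math/9908015 — 2 statements merged into one kernel-verified Lean document; each statement's English description precedes it below -/
import Mathlib

section
/- Let V be a real vector space with a hypercomplex structure (I_1, I_2, I_3), let F_2, F_3 be alternating bilinear forms on V such that F_2(I_1 X, Y) = -F_3(X, Y) for all X, Y, and suppose g(X,Y) := -F_2(I_2 X, Y) is symmetric and Hermitian with respect to I_2. Then g is Hermitian with respect to I_3, i.e., g(I_3 X, I_3 Y) = g(X, Y). -/
/-!
From the quaternion relations, `I₂ I₃ = I₁` and `I₁ I₃ = -I₂`. Hence
`F₂(I₂ I₃ X, I₃ Y) = F₂(I₁ X, I₃ Y) = -F₃(X, I₃ Y) = F₃(I₃ Y, X) = -F₂(I₁ I₃ Y, X) = F₂(I₂ Y, X)`,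
using the relation between `F₂` and `F₃` twice and the antisymmetry of `F₃` in between;
the symmetry of `g` then turns `F₂(I₂ Y, X)` into `F₂(I₂ X, Y)`.
-/

section Hypercomplex

variable {R M : Type*} [CommRing R] [AddCommGroup M] [Module R M] {I1 I2 I3 : M →ₗ[R] M}

theorem I2_apply_I3_of_quaternion (h22 : ∀ x, I2 (I2 x) = -x) (h12 : ∀ x, I1 (I2 x) = I3 x)
    (h21 : ∀ x, I2 (I1 x) = -I3 x) (x : M) : I2 (I3 x) = I1 x := by
  rw [← h12, h21, ← h12, h22, map_neg, neg_neg]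

theorem I1_apply_I3_of_quaternion (h11 : ∀ x, I1 (I1 x) = -x) (h12 : ∀ x, I1 (I2 x) = I3 x)
    (x : M) : I1 (I3 x) = -I2 x := by
  rw [← h12, h11]

theorem apply_I1_I3_eq_apply_I2_of_isAlt {F2 F3 : M →ₗ[R] M →ₗ[R] R} (hF3 : F3.IsAlt)
    (hrel : ∀ X Y, F2 (I1 X) Y = -F3 X Y) (h13 : ∀ x, I1 (I3 x) = -I2 x) (X Y : M) :
    F2 (I1 X) (I3 Y) = F2 (I2 Y) X :=
  calc F2 (I1 X) (I3 Y) = -F3 X (I3 Y) := hrel X (I3 Y)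
    _ = F3 (I3 Y) X := hF3.neg X (I3 Y)
    _ = -F2 (I1 (I3 Y)) X := by rw [hrel, neg_neg]
    _ = F2 (I2 Y) X := by rw [h13, map_neg, LinearMap.neg_apply, neg_neg]

end Hypercomplex

theorem stmt3_general (V : Type*) [AddCommGroup V] [Module ℝ V]
    (I1 I2 I3 : V →ₗ[ℝ] V)
    (h11 : ∀ x, I1 (I1 x) = -x) (h22 : ∀ x, I2 (I2 x) = -x)
    (h12 : ∀ x, I1 (I2 x) = I3 x) (h21 : ∀ x, I2 (I1 x) = -I3 x)
    (F2 F3 : V →ₗ[ℝ] V →ₗ[ℝ] ℝ)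
    (hA3 : ∀ X, F3 X X = 0)
    (hrel : ∀ X Y, F2 (I1 X) Y = -(F3 X Y))
    (hsym : ∀ X Y, -(F2 (I2 X) Y) = -(F2 (I2 Y) X)) :
    ∀ X Y, -(F2 (I2 (I3 X)) (I3 Y)) = -(F2 (I2 X) Y) := by
  intro X Y
  rw [I2_apply_I3_of_quaternion h22 h12 h21,
    apply_I1_I3_eq_apply_I2_of_isAlt hA3 hrel (I1_apply_I3_of_quaternion h11 h12)]
  exact (hsym X Y).symm

/-- If `F₂, F₃` are alternating bilinear forms with `F₂(I₁X, Y) = -F₃(X,Y)` and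
`g(X,Y) := -F₂(I₂X, Y)` is symmetric and `I₂`-Hermitian, then `g` is `I₃`-Hermitian. -/
theorem stmt3 (V : Type*) [AddCommGroup V] [Module ℝ V]
    (I1 I2 I3 : V →ₗ[ℝ] V)
    (h11 : ∀ x, I1 (I1 x) = -x) (h22 : ∀ x, I2 (I2 x) = -x) (h33 : ∀ x, I3 (I3 x) = -x)
    (h12 : ∀ x, I1 (I2 x) = I3 x) (h21 : ∀ x, I2 (I1 x) = -I3 x)
    (F2 F3 : V →ₗ[ℝ] V →ₗ[ℝ] ℝ)
    (hA2 : ∀ X, F2 X X = 0) (hA3 : ∀ X, F3 X X = 0)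
    (hrel : ∀ X Y, F2 (I1 X) Y = -(F3 X Y))
    (hsym : ∀ X Y, -(F2 (I2 X) Y) = -(F2 (I2 Y) X))
    (hherm2 : ∀ X Y, -(F2 (I2 (I2 X)) (I2 Y)) = -(F2 (I2 X) Y)) :
    ∀ X Y, -(F2 (I2 (I3 X)) (I3 Y)) = -(F2 (I2 X) Y) :=
  stmt3_general V I1 I2 I3 h11 h22 h12 h21 F2 F3 hA3 hrel hsym
end

section
/- With notation as in the perturbed-metric construction: let g be a hyper-Hermitian inner product on V, v ∈ V nonzero, α(X) := g(v, X), α_a(X) := -g(v, I_a X), and for real constants p, q define ĥ(X,Y) = p·g(X,Y) + (q/4)(α(X)α(Y) + Σ_a α_a(X)α_a(Y)). If p + (q/4)g(v,v) > 0 and p > 0, then ĥ is positive definite. -/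
/-!
Each `Iₐ` is a skew isometry, so `αₐ(X) = g(Iₐv, X)`, and the four vectors `v, I₁v, I₂v, I₃v`
are pairwise orthogonal of length `‖v‖` (the `Iₐ` anticommute). Bessel's inequality for this
frame gives `0 ≤ α(X)² + Σ αₐ(X)² ≤ ‖v‖²‖X‖²`, so `ĥ(X,X)` lies between `p‖X‖²` and
`(p + (q/4)‖v‖²)‖X‖²` (in the order depending on the sign of `q`); both bounds are positive.
-/

open RealInnerProductSpace

section

variable {V : Type*} [NormedAddCommGroup V] [InnerProductSpace ℝ V]

theorem inner_map_right_eq_neg_inner_map_left {I : V →ₗ[ℝ] V} (hsq : ∀ x, I (I x) = -x)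
    (hI : ∀ x y, ⟪I x, I y⟫ = ⟪x, y⟫) (x y : V) : ⟪x, I y⟫ = -⟪I x, y⟫ := by
  rw [← hI x (I y), hsq, inner_neg_right]

theorem inner_map_self_right_eq_zero {I : V →ₗ[ℝ] V} (hsq : ∀ x, I (I x) = -x)
    (hI : ∀ x y, ⟪I x, I y⟫ = ⟪x, y⟫) (x : V) : ⟪x, I x⟫ = 0 := by
  have h := inner_map_right_eq_neg_inner_map_left hsq hI x x
  linarith [real_inner_comm x (I x)]

structure IsHyperHermitian (I1 I2 I3 : V →ₗ[ℝ] V) : Prop where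
  sq1 : ∀ x, I1 (I1 x) = -x
  sq2 : ∀ x, I2 (I2 x) = -x
  sq3 : ∀ x, I3 (I3 x) = -x
  mul12 : ∀ x, I1 (I2 x) = I3 x
  mul21 : ∀ x, I2 (I1 x) = -I3 x
  inner1 : ∀ x y : V, ⟪I1 x, I1 y⟫ = ⟪x, y⟫
  inner2 : ∀ x y : V, ⟪I2 x, I2 y⟫ = ⟪x, y⟫
  inner3 : ∀ x y : V, ⟪I3 x, I3 y⟫ = ⟪x, y⟫

def quaternionicFrame (I1 I2 I3 : V →ₗ[ℝ] V) (v : V) : Fin 4 → V := ![v, I1 v, I2 v, I3 v]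

namespace IsHyperHermitian

variable {I1 I2 I3 : V →ₗ[ℝ] V}

theorem orthonormal_quaternionicFrame (h : IsHyperHermitian I1 I2 I3) {u : V} (hu : ‖u‖ = 1) :
    Orthonormal ℝ (quaternionicFrame I1 I2 I3 u) := by
  have o1 := inner_map_self_right_eq_zero h.sq1 h.inner1 u
  have o2 := inner_map_self_right_eq_zero h.sq2 h.inner2 u
  have o3 := inner_map_self_right_eq_zero h.sq3 h.inner3 u
  have o12 : ⟪I1 u, I2 u⟫ = 0 := by
    rw [inner_map_right_eq_neg_inner_map_left h.sq2 h.inner2, h.mul21, inner_neg_left,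
      neg_neg, real_inner_comm, o3]
  have o13 : ⟪I1 u, I3 u⟫ = 0 := by rw [← h.mul12, h.inner1, o2]
  have o23 : ⟪I2 u, I3 u⟫ = 0 := by rw [← h.mul12, inner_map_self_right_eq_zero h.sq1 h.inner1]
  have n1 : ‖I1 u‖ = 1 := hu ▸ (I1.isometryOfInner h.inner1).norm_map u
  have n2 : ‖I2 u‖ = 1 := hu ▸ (I2.isometryOfInner h.inner2).norm_map u
  have n3 : ‖I3 u‖ = 1 := hu ▸ (I3.isometryOfInner h.inner3).norm_map u
  rw [orthonormal_iff_ite]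
  intro i j
  fin_cases i <;> fin_cases j <;>
    simp [quaternionicFrame, hu, n1, n2, n3, o1, o2, o3, o12, o13, o23,
      real_inner_comm u, real_inner_comm (I1 u), real_inner_comm (I2 u)]

theorem sum_inner_quaternionicFrame_sq_le (h : IsHyperHermitian I1 I2 I3) (v X : V) :
    ∑ i, ⟪quaternionicFrame I1 I2 I3 v i, X⟫ ^ 2 ≤ ‖v‖ ^ 2 * ‖X‖ ^ 2 := by
  rcases eq_or_ne v 0 with rfl | hv
  · simp [quaternionicFrame, Fin.sum_univ_four]
  set u := ‖v‖⁻¹ • v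
  have hu : ‖u‖ = 1 := norm_smul_inv_norm hv
  have hframe : ∀ i, quaternionicFrame I1 I2 I3 v i = ‖v‖ • quaternionicFrame I1 I2 I3 u i := by
    have hvu : v = ‖v‖ • u := by rw [smul_inv_smul₀ (norm_ne_zero_iff.mpr hv)]
    intro i
    fin_cases i <;> conv_lhs => rw [hvu]
    all_goals simp [quaternionicFrame]
  have bessel := (h.orthonormal_quaternionicFrame hu).sum_inner_products_le X (s := Finset.univ)
  simp only [Real.norm_eq_abs, sq_abs] at bessel
  simp only [hframe, real_inner_smul_left, mul_pow, ← Finset.mul_sum]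
  gcongr

end IsHyperHermitian

theorem add_mul_pos_of_le_mul {p k c s t : ℝ} (hp : 0 < p) (hpk : 0 < p + k * c) (ht : 0 < t)
    (hs₀ : 0 ≤ s) (hs : s ≤ c * t) : 0 < p * t + k * s := by
  rcases le_total 0 k with hk | hk
  · nlinarith [mul_pos hp ht, mul_nonneg hk hs₀]
  · nlinarith [mul_pos hpk ht, mul_le_mul_of_nonpos_left hs hk]

end

theorem stmt15_general (V : Type*) [NormedAddCommGroup V] [InnerProductSpace ℝ V]
    (I1 I2 I3 : V →ₗ[ℝ] V)
    (h11 : ∀ x, I1 (I1 x) = -x) (h22 : ∀ x, I2 (I2 x) = -x) (h33 : ∀ x, I3 (I3 x) = -x)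
    (h12 : ∀ x, I1 (I2 x) = I3 x) (h21 : ∀ x, I2 (I1 x) = -I3 x)
    (hg1 : ∀ x y : V, (inner ℝ (I1 x) (I1 y) : ℝ) = inner ℝ x y)
    (hg2 : ∀ x y : V, (inner ℝ (I2 x) (I2 y) : ℝ) = inner ℝ x y)
    (hg3 : ∀ x y : V, (inner ℝ (I3 x) (I3 y) : ℝ) = inner ℝ x y)
    (v : V) (p q : ℝ)
    (hpq : p + q / 4 * (inner ℝ v v : ℝ) > 0) (hp : p > 0) :
    let α : V → ℝ := fun X => inner ℝ v X
    let α1 : V → ℝ := fun X => -(inner ℝ v (I1 X) : ℝ)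
    let α2 : V → ℝ := fun X => -(inner ℝ v (I2 X) : ℝ)
    let α3 : V → ℝ := fun X => -(inner ℝ v (I3 X) : ℝ)
    let hhat : V → V → ℝ := fun X Y =>
      p * (inner ℝ X Y : ℝ) +
        q / 4 * (α X * α Y + (α1 X * α1 Y + α2 X * α2 Y + α3 X * α3 Y))
    ∀ X : V, X ≠ 0 → 0 < hhat X X := by
  intro α α1 α2 α3 hhat X hX
  have h : IsHyperHermitian I1 I2 I3 := ⟨h11, h22, h33, h12, h21, hg1, hg2, hg3⟩
  have hhat_eq :
      hhat X X = p * ‖X‖ ^ 2 + q / 4 * ∑ i, ⟪quaternionicFrame I1 I2 I3 v i, X⟫ ^ 2 := by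
    simp only [hhat, α, α1, α2, α3, inner_map_right_eq_neg_inner_map_left h11 hg1,
      inner_map_right_eq_neg_inner_map_left h22 hg2,
      inner_map_right_eq_neg_inner_map_left h33 hg3, Fin.sum_univ_four, quaternionicFrame,
      Matrix.cons_val, real_inner_self_eq_norm_sq]
    ring
  rw [real_inner_self_eq_norm_sq] at hpq
  rw [hhat_eq]
  exact add_mul_pos_of_le_mul hp hpq (by positivity) (by positivity)
    (h.sum_inner_quaternionicFrame_sq_le v X)

/-- Perturbed metric positivity: with `α(X) = g(v,X)`, `α_a(X) = -g(v, I_a X)` and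
`ĥ(X,Y) = p g(X,Y) + (q/4)(α(X)α(Y) + Σ_a α_a(X)α_a(Y))`, if `p + (q/4) g(v,v) > 0`
and `p > 0`, then `ĥ` is positive definite. -/
theorem stmt15 (V : Type*) [NormedAddCommGroup V] [InnerProductSpace ℝ V]
    [FiniteDimensional ℝ V]
    (I1 I2 I3 : V →ₗ[ℝ] V)
    (h11 : ∀ x, I1 (I1 x) = -x) (h22 : ∀ x, I2 (I2 x) = -x) (h33 : ∀ x, I3 (I3 x) = -x)
    (h12 : ∀ x, I1 (I2 x) = I3 x) (h21 : ∀ x, I2 (I1 x) = -I3 x)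
    (hg1 : ∀ x y : V, (inner ℝ (I1 x) (I1 y) : ℝ) = inner ℝ x y)
    (hg2 : ∀ x y : V, (inner ℝ (I2 x) (I2 y) : ℝ) = inner ℝ x y)
    (hg3 : ∀ x y : V, (inner ℝ (I3 x) (I3 y) : ℝ) = inner ℝ x y)
    (v : V) (hv : v ≠ 0) (p q : ℝ)
    (hpq : p + q / 4 * (inner ℝ v v : ℝ) > 0) (hp : p > 0) :
    let α : V → ℝ := fun X => inner ℝ v X
    let α1 : V → ℝ := fun X => -(inner ℝ v (I1 X) : ℝ)
    let α2 : V → ℝ := fun X => -(inner ℝ v (I2 X) : ℝ)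
    let α3 : V → ℝ := fun X => -(inner ℝ v (I3 X) : ℝ)
    let hhat : V → V → ℝ := fun X Y =>
      p * (inner ℝ X Y : ℝ) +
        q / 4 * (α X * α Y + (α1 X * α1 Y + α2 X * α2 Y + α3 X * α3 Y))
    ∀ X : V, X ≠ 0 → 0 < hhat X X :=
  stmt15_general V I1 I2 I3 h11 h22 h33 h12 h21 hg1 hg2 hg3 v p q hpq hp
end
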